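/- Let T₁ = (S₁,Σ₁,κ₁) and T₂ = (S₂,Σ₂,κ₂) be STSs, α : S₁ → S₂ measurable, and μ a probability measure on S₁. If T₂ is a μ-sound α-abstraction of T₁, then for every B ∈ Σ₂: if T₂ is decisive w.r.t. B from α_# μ (i.e. Prob^{T₂}_{α_# μ}(F B ∪ F B̃) = 1, where B̃ is the avoid-set of B in T₂), then T₁ is decisive w.r.t. α⁻¹(B) from μ. -/

import Mathlib

/-!
Reaching `C` has path probability zero iff every marginal `Ωᵏ μ` gives `C` measure zero, so the
avoid-set of `B` is `{t | ∀ k, κᵏ(t, B) = 0}`, a measurable set. Iterating the abstraction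
property, `α_# (Ω₁ᵏ δ_s)` and `Ω₂ᵏ δ_{α s}` have the same null sets, hence `α⁻¹(B̃) ⊆ (α⁻¹ B)~`.
Decisiveness says `B ∪ B̃` is reached almost surely in `T₂`; soundness carries this to
`α⁻¹(B ∪ B̃)` in `T₁`, which is contained in the target event.
-/

open MeasureTheory ProbabilityTheory ENNReal Filter Topology

namespace STS

variable {S : Type*} [MeasurableSpace S]

/-- Probability of the cylinder `Cyl(A 0, …, A n)` for the Markov chain with kernel `κ`
and initial distribution `μ`. -/
noncomputable def cylProb (κ : Kernel S S) : ℕ → Measure S → (ℕ → Set S) → ℝ≥0∞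
  | 0, μ, A => μ (A 0)
  | n + 1, μ, A => ∫⁻ s in A 0, cylProb κ n (κ s) (fun i => A (i + 1)) ∂μ

/-- `P` assigns to each initial (probability) distribution the path measure (on `ℕ → S`,
with the product σ-algebra) of the time-homogeneous Markov chain with transition kernel `κ`,
as given by the Ionescu–Tulcea construction: it is the unique probability measure giving
cylinders their prescribed probabilities. -/
def IsPathMeasure (κ : Kernel S S) (P : Measure S → Measure (ℕ → S)) : Prop :=
  ∀ μ : Measure S, IsProbabilityMeasure μ →
    IsProbabilityMeasure (P μ) ∧
    ∀ (n : ℕ) (A : ℕ → Set S), (∀ i, MeasurableSet (A i)) →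
      P μ {ρ | ∀ i ≤ n, ρ i ∈ A i} = cylProb κ n μ A

/-- The path event `F B`: eventually reach `B`. -/
def evF (B : Set S) : Set (ℕ → S) := {ρ | ∃ k, ρ k ∈ B}

/-- The path event `F≤n B`. -/
def evFle (n : ℕ) (B : Set S) : Set (ℕ → S) := {ρ | ∃ k ≤ n, ρ k ∈ B}

/-- The path event `F≥p B`. -/
def evFge (p : ℕ) (B : Set S) : Set (ℕ → S) := {ρ | ∃ k, p ≤ k ∧ ρ k ∈ B}

/-- The path event `GF B`: visit `B` infinitely often. -/
def evGF (B : Set S) : Set (ℕ → S) := {ρ | ∀ n, ∃ k, n ≤ k ∧ ρ k ∈ B}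

/-- The path event `FG B`: eventually stay in `B` forever. -/
def evFG (B : Set S) : Set (ℕ → S) := {ρ | ∃ n, ∀ k, n ≤ k → ρ k ∈ B}

/-- The until event `B' U B`. -/
def evU (B' B : Set S) : Set (ℕ → S) := {ρ | ∃ k, ρ k ∈ B ∧ ∀ j < k, ρ j ∈ B'}

/-- The bounded until event `B' U≤n B`. -/
def evUle (n : ℕ) (B' B : Set S) : Set (ℕ → S) := {ρ | ∃ k ≤ n, ρ k ∈ B ∧ ∀ j < k, ρ j ∈ B'}

/-- The avoid-set `B̃` of `B`: states from which `B` is reached with probability `0`. -/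
def avoid (P : Measure S → Measure (ℕ → S)) (B : Set S) : Set S :=
  {s | P (Measure.dirac s) (evF B) = 0}

/-- `T` is decisive w.r.t. `B` from `μ`. -/
def Decisive (P : Measure S → Measure (ℕ → S)) (μ : Measure S) (B : Set S) : Prop :=
  P μ (evF B ∪ evF (avoid P B)) = 1

/-- `T` is strongly decisive w.r.t. `B` from `μ`. -/
def StronglyDecisive (P : Measure S → Measure (ℕ → S)) (μ : Measure S) (B : Set S) : Prop :=
  P μ (evGF B ∪ evF (avoid P B)) = 1

/-- `T` is persistently decisive w.r.t. `B` from `μ`. -/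
def PersistentlyDecisive (P : Measure S → Measure (ℕ → S)) (μ : Measure S) (B : Set S) : Prop :=
  ∀ p : ℕ, P μ (evFge p B ∪ evFge p (avoid P B)) = 1

/-- `PreProb(B)`: measurable sets `B'` from which `B` is reached in one step with positive
probability, whatever the initial distribution concentrated on `B'`. -/
def PreProb (P : Measure S → Measure (ℕ → S)) (B : Set S) : Set (Set S) :=
  {B' | MeasurableSet B' ∧ ∀ μ' : Measure S, IsProbabilityMeasure μ' → μ' B' = 1 →
    0 < P μ' {ρ | ρ 0 ∈ B' ∧ ρ 1 ∈ B}}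

/-- `T` is fair w.r.t. `B` from `μ`. -/
def Fair (P : Measure S → Measure (ℕ → S)) (μ : Measure S) (B : Set S) : Prop :=
  ∀ B' ∈ PreProb P B, 0 < P μ (evGF B') →
    P μ (evGF B ∩ evGF B') = P μ (evGF B')

/-- The one-step measure transformer `Ω_T`. -/
noncomputable def Omega (κ : Kernel S S) (μ : Measure S) : Measure S :=
  μ.bind (fun s => κ s)

/-- Two measures are qualitatively equivalent if they have the same null (measurable) sets. -/
def QualEquiv {T : Type*} [MeasurableSpace T] (μ ν : Measure T) : Prop :=
  ∀ A : Set T, MeasurableSet A → (μ A = 0 ↔ ν A = 0)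

/-- `T₂ = (S₂,κ₂)` is an `α`-abstraction of `T₁ = (S₁,κ₁)`. -/
def IsAbstraction {S₁ S₂ : Type*} [MeasurableSpace S₁] [MeasurableSpace S₂]
    (κ₁ : Kernel S₁ S₁) (κ₂ : Kernel S₂ S₂) (α : S₁ → S₂) : Prop :=
  ∀ μ : Measure S₁, IsProbabilityMeasure μ →
    QualEquiv (Measure.map α (Omega κ₁ μ)) (Omega κ₂ (Measure.map α μ))

lemma evF_union {X : Type*} (B C : Set X) : evF (B ∪ C) = evF B ∪ evF C := by
  ext ρ
  simp [evF, exists_or]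

lemma evF_mono {X : Type*} {B C : Set X} (h : B ⊆ C) : evF B ⊆ evF C :=
  fun _ ⟨k, hk⟩ => ⟨k, h hk⟩

section Paths

variable (κ : Kernel S S)

lemma measurable_cylProb_kernel (n : ℕ) {A : ℕ → Set S} (hA : ∀ i, MeasurableSet (A i)) :
    Measurable fun s => cylProb κ n (κ s) A := by
  induction n generalizing A with
  | zero => exact κ.measurable_coe (hA 0)
  | succ n ih =>
    simp only [cylProb, ← lintegral_indicator (hA 0)]
    exact ((ih fun i => hA (i + 1)).indicator (hA 0)).lintegral_kernel

lemma cylProb_bind (n : ℕ) (μ : Measure S) {A : ℕ → Set S} (hA : ∀ i, MeasurableSet (A i)) :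
    cylProb κ n (μ.bind κ) A = ∫⁻ s, cylProb κ n (κ s) A ∂μ := by
  cases n with
  | zero => exact Measure.bind_apply (hA 0) κ.measurable.aemeasurable
  | succ n =>
    simp only [cylProb, ← lintegral_indicator (hA 0)]
    exact Measure.lintegral_bind κ.measurable.aemeasurable
      ((measurable_cylProb_kernel κ n fun i => hA (i + 1)).indicator (hA 0)).aemeasurable

lemma Omega_iterate_eq_bind_pow (k : ℕ) (μ : Measure S) :
    (Omega κ)^[k] μ = μ.bind ⇑(κ ^ k) := by
  induction k generalizing μ with
  | zero =>
    show μ = μ.bind Kernel.id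
    simp
  | succ k ih =>
    rw [Function.iterate_succ_apply, ih, Omega, pow_succ,
      Measure.bind_bind κ.measurable.aemeasurable (κ ^ k).measurable.aemeasurable]
    rfl

lemma Omega_iterate_dirac (k : ℕ) (s : S) : (Omega κ)^[k] (Measure.dirac s) = (κ ^ k) s := by
  rw [Omega_iterate_eq_bind_pow, Measure.dirac_bind (κ ^ k).measurable]

lemma cylProb_marginal (n : ℕ) (μ : Measure S) {C : Set S} (hC : MeasurableSet C) :
    cylProb κ n μ (fun i => if i = n then C else Set.univ) = (Omega κ)^[n] μ C := by
  induction n generalizing μ with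
  | zero => simp [cylProb]
  | succ n ih =>
    have hA : ∀ i, MeasurableSet (if i = n then C else Set.univ) := by
      intro i; split_ifs <;> simp [hC]
    calc cylProb κ (n + 1) μ (fun i => if i = n + 1 then C else Set.univ)
        = ∫⁻ s, cylProb κ n (κ s) (fun i => if i = n then C else Set.univ) ∂μ := by
          simp [cylProb]
      _ = (Omega κ)^[n + 1] μ C := by
          rw [← cylProb_bind κ n μ hA, ih, Function.iterate_succ_apply, Omega]

variable {κ} {P : Measure S → Measure (ℕ → S)}

lemma IsPathMeasure.apply_eval_preimage (hP : IsPathMeasure κ P) {μ : Measure S}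
    (hμ : IsProbabilityMeasure μ) (n : ℕ) {C : Set S} (hC : MeasurableSet C) :
    P μ {ρ | ρ n ∈ C} = (Omega κ)^[n] μ C := by
  have hcyl : {ρ : ℕ → S | ρ n ∈ C}
      = {ρ | ∀ i ≤ n, ρ i ∈ (fun j => if j = n then C else Set.univ) i} := by
    ext ρ
    refine ⟨fun h i _ => ?_, fun h => by simpa using h n le_rfl⟩
    show ρ i ∈ if i = n then C else Set.univ
    split_ifs with hi
    · exact hi ▸ h
    · trivial
  rw [hcyl, (hP μ hμ).2 n _ fun i => by split_ifs <;> simp [hC], cylProb_marginal κ n μ hC]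

lemma IsPathMeasure.evF_eq_zero_iff (hP : IsPathMeasure κ P) {μ : Measure S}
    (hμ : IsProbabilityMeasure μ) {C : Set S} (hC : MeasurableSet C) :
    P μ (evF C) = 0 ↔ ∀ k, (Omega κ)^[k] μ C = 0 := by
  have hcov : evF C = ⋃ n, {ρ : ℕ → S | ρ n ∈ C} := by
    ext ρ
    simp [evF]
  simp only [hcov, measure_iUnion_null_iff, hP.apply_eval_preimage hμ _ hC]

lemma IsPathMeasure.mem_avoid_iff (hP : IsPathMeasure κ P) {B : Set S} (hB : MeasurableSet B)
    (s : S) : s ∈ avoid P B ↔ ∀ k, (κ ^ k) s B = 0 := by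
  simp only [avoid, Set.mem_ofPred_eq, hP.evF_eq_zero_iff inferInstance hB,
    Omega_iterate_dirac]

lemma IsPathMeasure.measurableSet_avoid (hP : IsPathMeasure κ P) {B : Set S}
    (hB : MeasurableSet B) : MeasurableSet (avoid P B) := by
  have h : avoid P B = ⋂ k, (fun s => (κ ^ k) s B) ⁻¹' {0} := by
    ext s
    simp [hP.mem_avoid_iff hB]
  rw [h]
  exact .iInter fun k => (κ ^ k).measurable_coe hB (measurableSet_singleton 0)

end Paths

instance isProbabilityMeasure_Omega (κ : Kernel S S) [IsMarkovKernel κ] (μ : Measure S)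
    [IsProbabilityMeasure μ] : IsProbabilityMeasure (Omega κ μ) := by
  rw [Omega]
  infer_instance

lemma isProbabilityMeasure_Omega_iterate (κ : Kernel S S) [IsMarkovKernel κ] (k : ℕ)
    (μ : Measure S) [IsProbabilityMeasure μ] : IsProbabilityMeasure ((Omega κ)^[k] μ) := by
  induction k generalizing μ with
  | zero => assumption
  | succ k ih => exact ih (Omega κ μ)

lemma qualEquiv_Omega (κ : Kernel S S) {ν ν' : Measure S} (h : QualEquiv ν ν') :
    QualEquiv (Omega κ ν) (Omega κ ν') := by
  intro A hA
  have hpos : MeasurableSet {s | κ s A ≠ 0} :=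
    (κ.measurable_coe hA (measurableSet_singleton 0)).compl
  -- `Ω ρ A = ∫ κ(·, A) dρ` vanishes iff `κ(·, A)` vanishes `ρ`-a.e.
  have key : ∀ ρ : Measure S, Omega κ ρ A = 0 ↔ ρ {s | κ s A ≠ 0} = 0 := fun ρ => by
    rw [Omega, Measure.bind_apply hA κ.measurable.aemeasurable,
      lintegral_eq_zero_iff (κ.measurable_coe hA), Filter.EventuallyEq, ae_iff]
    rfl
  rw [key, key, h _ hpos]

section Abstraction

variable {S₁ S₂ : Type*} [MeasurableSpace S₁] [MeasurableSpace S₂]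
  {κ₁ : Kernel S₁ S₁} {κ₂ : Kernel S₂ S₂} {α : S₁ → S₂}

lemma IsAbstraction.qualEquiv_iterate [IsMarkovKernel κ₁] (habs : IsAbstraction κ₁ κ₂ α)
    (μ : Measure S₁) [IsProbabilityMeasure μ] (k : ℕ) :
    QualEquiv ((Omega κ₁)^[k] μ |>.map α) ((Omega κ₂)^[k] (μ.map α)) := by
  induction k with
  | zero => exact fun _ _ => Iff.rfl
  | succ k ih =>
    simp only [Function.iterate_succ_apply']
    have := isProbabilityMeasure_Omega_iterate κ₁ k μ
    exact fun A hA => (habs _ this A hA).trans (qualEquiv_Omega κ₂ ih A hA)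

lemma IsAbstraction.preimage_avoid_subset [IsMarkovKernel κ₁] (habs : IsAbstraction κ₁ κ₂ α)
    (hα : Measurable α) {P₁ : Measure S₁ → Measure (ℕ → S₁)} (hP₁ : IsPathMeasure κ₁ P₁)
    {P₂ : Measure S₂ → Measure (ℕ → S₂)} (hP₂ : IsPathMeasure κ₂ P₂) {B : Set S₂}
    (hB : MeasurableSet B) : α ⁻¹' avoid P₂ B ⊆ avoid P₁ (α ⁻¹' B) := by
  intro s hs
  refine (hP₁.evF_eq_zero_iff inferInstance (hα hB)).2 fun k => ?_
  rw [← Measure.map_apply hα hB, habs.qualEquiv_iterate _ k B hB, Measure.map_dirac' hα,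
    Omega_iterate_dirac]
  exact (hP₂.mem_avoid_iff hB _).1 hs k

end Abstraction

theorem statement_9_general {S₁ S₂ : Type*} [MeasurableSpace S₁] [MeasurableSpace S₂]
    (κ₁ : Kernel S₁ S₁) [IsMarkovKernel κ₁] (κ₂ : Kernel S₂ S₂)
    (P₁ : Measure S₁ → Measure (ℕ → S₁)) (hP₁ : IsPathMeasure κ₁ P₁)
    (P₂ : Measure S₂ → Measure (ℕ → S₂)) (hP₂ : IsPathMeasure κ₂ P₂)
    (α : S₁ → S₂) (hα : Measurable α) (habs : IsAbstraction κ₁ κ₂ α)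
    (μ : Measure S₁) (hμ : IsProbabilityMeasure μ)
    (hsound : ∀ B : Set S₂, MeasurableSet B →
      P₂ (μ.map α) (evF B) = 1 → P₁ μ (evF (α ⁻¹' B)) = 1) :
    ∀ B : Set S₂, MeasurableSet B →
      Decisive P₂ (μ.map α) B → Decisive P₁ μ (α ⁻¹' B) := by
  intro B hB hdec
  have hreach : P₁ μ (evF (α ⁻¹' (B ∪ avoid P₂ B))) = 1 :=
    hsound _ (hB.union (hP₂.measurableSet_avoid hB)) (by rwa [evF_union])
  have := (hP₁ μ hμ).1
  refine le_antisymm prob_le_one (hreach ▸ measure_mono ?_)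
  rw [Set.preimage_union, evF_union]
  exact Set.union_subset_union_right _ (evF_mono (habs.preimage_avoid_subset hα hP₁ hP₂ hB))

/-- through a `μ`-sound `α`-abstraction, decisiveness of `T₂` w.r.t. `B`
from `α_# μ` transfers to decisiveness of `T₁` w.r.t. `α⁻¹(B)` from `μ`. -/
theorem statement_9 {S₁ S₂ : Type*} [MeasurableSpace S₁] [MeasurableSpace S₂]
    (κ₁ : Kernel S₁ S₁) [IsMarkovKernel κ₁] (κ₂ : Kernel S₂ S₂) [IsMarkovKernel κ₂]
    (P₁ : Measure S₁ → Measure (ℕ → S₁)) (hP₁ : IsPathMeasure κ₁ P₁)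
    (P₂ : Measure S₂ → Measure (ℕ → S₂)) (hP₂ : IsPathMeasure κ₂ P₂)
    (α : S₁ → S₂) (hα : Measurable α) (habs : IsAbstraction κ₁ κ₂ α)
    (μ : Measure S₁) (hμ : IsProbabilityMeasure μ)
    (hsound : ∀ B : Set S₂, MeasurableSet B →
      P₂ (μ.map α) (evF B) = 1 → P₁ μ (evF (α ⁻¹' B)) = 1) :
    ∀ B : Set S₂, MeasurableSet B →
      Decisive P₂ (μ.map α) B → Decisive P₁ μ (α ⁻¹' B) :=
  statement_9_general κ₁ κ₂ P₁ hP₁ P₂ hP₂ α hα habs μ hμ hsound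

end STS
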